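/- Let S be a minimal properly elliptic surface in P^6 of degree 12 with K_S·H_S = 4, χ(O_S) = 3, fibered over a curve B with general fiber F and K_S = m·F + Σ(m_i - 1)F_i (multiple fibers m_i F_i), where m = χ(O_S) + 2g(B) - 2. If each fiber has degree F·H_S ≥ 3, then the only possibility is g(B) = 0, m = 1, no multiple fibers, and F·H_S = 4. -/
import Mathlib


/-- Canonical bundle formula constraint for a minimal elliptic surface of degree 12 in
P^6 with χ(O_S) = 3 and K_S·H_S = 4: writing K_S = m·F + Σ(mᵢ - 1)Fᵢ with
m = χ + 2g(B) - 2 = 1 + 2g(B), multiple fibers of multiplicities mᵢ ≥ 2 (Fᵢ = F/mᵢ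
numerically), and fiber degree d = F·H_S ≥ 3, the relation
(m + Σ(mᵢ-1)/mᵢ)·d = 4 forces g(B) = 0, m = 1, no multiple fibers, and d = 4. -/
theorem stmt19 (gB : ℕ) (d : ℤ) (mult : Multiset ℤ)
    (hmult : ∀ x ∈ mult, 2 ≤ x)
    (hd : 3 ≤ d)
    (hKH : ((1 + 2*(gB : ℚ)) + (mult.map (fun x => ((x : ℚ) - 1)/(x : ℚ))).sum)
      * (d : ℚ) = 4) :
    gB = 0 ∧ (1 + 2*(gB : ℤ)) = 1 ∧ mult = 0 ∧ d = 4 := by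
  simp only [Multiset.pure_def, Multiset.bind_def, Multiset.bind_singleton,
    Multiset.map_map, Function.comp_apply] at hKH
  have hterm : ∀ y ∈ mult.map (fun x : ℤ => ((x : ℚ) - 1)/(x : ℚ)), (1:ℚ)/2 ≤ y := by
    intro y hy
    simp only [Multiset.mem_map] at hy
    rcases hy with ⟨x, hx, rfl⟩
    have h2 : (2:ℚ) ≤ (x:ℚ) := by exact_mod_cast hmult x hx
    rw [div_le_div_iff₀ (by norm_num : (0:ℚ) < 2) (by linarith : (0:ℚ) < (x:ℚ))]
    linarith
  have hs0 : 0 ≤ (mult.map (fun x : ℤ => ((x : ℚ) - 1)/(x : ℚ))).sum :=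
    Multiset.sum_nonneg (fun y hy => le_trans (by norm_num) (hterm y hy))
  have hdq : (3:ℚ) ≤ (d:ℚ) := by exact_mod_cast hd
  have hgB : gB = 0 := by
    by_contra h
    have h1 : 1 ≤ gB := Nat.one_le_iff_ne_zero.mpr h
    have : (1:ℚ) ≤ (gB:ℚ) := by exact_mod_cast h1
    nlinarith
  subst hgB
  have hmult0 : mult = 0 := by
    by_contra h
    rcases Multiset.exists_mem_of_ne_zero h with ⟨a, ha⟩
    have hmem : ((a:ℚ) - 1)/(a:ℚ) ∈ mult.map (fun x : ℤ => ((x : ℚ) - 1)/(x : ℚ)) :=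
      Multiset.mem_map.mpr ⟨a, ha, rfl⟩
    have hle : ((a:ℚ) - 1)/(a:ℚ) ≤ (mult.map (fun x : ℤ => ((x : ℚ) - 1)/(x : ℚ))).sum :=
      Multiset.single_le_sum (fun y hy => le_trans (by norm_num) (hterm y hy)) _ hmem
    have h12 := hterm _ hmem
    nlinarith
  subst hmult0
  simp only [Multiset.map_zero, Multiset.sum_zero, Nat.cast_zero] at hKH
  have hd4 : (d:ℚ) = 4 := by linarith
  exact ⟨rfl, by norm_num, rfl, by exact_mod_cast hd4⟩
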